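/- Let P = ℂ³ with standard basis e₁, e₂, e₃, let R = ℂ^h with the standard symmetric bilinear form Q(x,y) = Σ x_α y_α, let A and B be h×h complex matrices with B invertible, and set E = { w ∈ Hom(P,R) : w(e₂) = A·w(e₁) and w(e₃) = B·w(e₁) }. Then E is an abelian subspace of Hom(P,R) if and only if A = Aᵀ, B = Bᵀ, and A·B⁻¹ = B⁻¹·A. -/
import Mathlib


/-- A linear subspace `E ⊆ Hom(P,R)` is *abelian* (with respect to a bilinear form `Q` on `R`)
if `Q(A u, B u') = Q(B u, A u')` for all `A, B ∈ E` and all `u, u' ∈ P`. -/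
def IsAbelianSubspace {P R : Type*} [AddCommGroup P] [Module ℂ P]
    [AddCommGroup R] [Module ℂ R] (Q : R →ₗ[ℂ] R →ₗ[ℂ] ℂ)
    (E : Submodule ℂ (P →ₗ[ℂ] R)) : Prop :=
  ∀ A ∈ E, ∀ B ∈ E, ∀ u u' : P, Q (A u) (B u') = Q (B u) (A u')

/-- The standard symmetric bilinear form `Q(x,y) = ∑ x α * y α` on `ℂ^h`. -/
noncomputable def stdQ (h : ℕ) : (Fin h → ℂ) →ₗ[ℂ] (Fin h → ℂ) →ₗ[ℂ] ℂ :=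
  LinearMap.mk₂ ℂ (fun x y => ∑ α, x α * y α)
    (fun x x' y => by simp [add_mul, Finset.sum_add_distrib])
    (fun c x y => by simp [Finset.mul_sum, mul_assoc])
    (fun x y y' => by simp [mul_add, Finset.sum_add_distrib])
    (fun c x y => by
      simp only [Pi.smul_apply, smul_eq_mul, Finset.mul_sum]
      exact Finset.sum_congr rfl fun i _ => by ring)

open Matrix

lemma stdQ_apply (h : ℕ) (x y : Fin h → ℂ) : stdQ h x y = x ⬝ᵥ y := rfl

lemma symdot {h : ℕ} (S : Matrix (Fin h) (Fin h) ℂ) (hS : Sᵀ = S)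
    (x y : Fin h → ℂ) : x ⬝ᵥ S.mulVec y = y ⬝ᵥ S.mulVec x := by
  rw [Matrix.dotProduct_mulVec, ← hS, Matrix.vecMul_transpose, dotProduct_comm, hS]

lemma dotswap {h : ℕ} (M N : Matrix (Fin h) (Fin h) ℂ) (hMN : (Mᵀ * N)ᵀ = Mᵀ * N)
    (v v' : Fin h → ℂ) : (M.mulVec v) ⬝ᵥ (N.mulVec v') = (M.mulVec v') ⬝ᵥ (N.mulVec v) := by
  have h1 : ∀ x y : Fin h → ℂ, (M.mulVec x) ⬝ᵥ (N.mulVec y) = x ⬝ᵥ ((Mᵀ * N).mulVec y) := by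
    intro x y
    rw [← Matrix.mulVec_mulVec, Matrix.dotProduct_mulVec x, Matrix.vecMul_transpose]
  rw [h1, h1, symdot _ hMN]

noncomputable def wOf {h : ℕ} (A B : Matrix (Fin h) (Fin h) ℂ) (v : Fin h → ℂ) :
    (Fin 3 → ℂ) →ₗ[ℂ] (Fin h → ℂ) where
  toFun x := x 0 • (1 : Matrix (Fin h) (Fin h) ℂ).mulVec v + x 1 • A.mulVec v + x 2 • B.mulVec v
  map_add' x y := by simp [add_smul]; module
  map_smul' c x := by simp [smul_smul, smul_add]

lemma wOf_e0 {h : ℕ} (A B : Matrix (Fin h) (Fin h) ℂ) (v : Fin h → ℂ) :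
    wOf A B v (Pi.single 0 1) = v := by
  simp [wOf, Pi.single_apply, Matrix.one_mulVec]

lemma wOf_e1 {h : ℕ} (A B : Matrix (Fin h) (Fin h) ℂ) (v : Fin h → ℂ) :
    wOf A B v (Pi.single 1 1) = A.mulVec v := by
  simp [wOf, Pi.single_apply]

lemma wOf_e2 {h : ℕ} (A B : Matrix (Fin h) (Fin h) ℂ) (v : Fin h → ℂ) :
    wOf A B v (Pi.single 2 1) = B.mulVec v := by
  simp [wOf, Pi.single_apply]

lemma single_dot_mulVec {h : ℕ} (M : Matrix (Fin h) (Fin h) ℂ) (α β : Fin h) :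
    (Pi.single α 1 : Fin h → ℂ) ⬝ᵥ M.mulVec (Pi.single β 1) = M α β := by
  simp [Matrix.mulVec, dotProduct, Pi.single_apply, Finset.sum_ite_eq]

lemma fin3_decomp (u : Fin 3 → ℂ) :
    u = u 0 • (Pi.single 0 1 : Fin 3 → ℂ) + u 1 • (Pi.single 1 1 : Fin 3 → ℂ)
      + u 2 • (Pi.single 2 1 : Fin 3 → ℂ) := by
  funext i; fin_cases i <;> simp [Pi.single_apply]

/-- with `P = ℂ³` (standard basis `e₁ e₂ e₃`), `R = ℂ^h` with the standard
symmetric form, `A, B` `h×h` matrices with `B` invertible, the subspace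
`E = { w : w(e₂) = A w(e₁), w(e₃) = B w(e₁) }` is abelian iff
`A = Aᵀ`, `B = Bᵀ` and `A B⁻¹ = B⁻¹ A`. -/
theorem plane_subspace_abelian_iff (h : ℕ)
    (A B : Matrix (Fin h) (Fin h) ℂ) (hB : IsUnit B)
    (E : Submodule ℂ ((Fin 3 → ℂ) →ₗ[ℂ] (Fin h → ℂ)))
    (hE : ∀ w : (Fin 3 → ℂ) →ₗ[ℂ] (Fin h → ℂ),
      w ∈ E ↔ w (Pi.single 1 1) = A.mulVec (w (Pi.single 0 1)) ∧
        w (Pi.single 2 1) = B.mulVec (w (Pi.single 0 1))) :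
    IsAbelianSubspace (stdQ h) E ↔
      (A.transpose = A ∧ B.transpose = B ∧ A * B⁻¹ = B⁻¹ * A) := by
  have hBd : IsUnit B.det := (Matrix.isUnit_iff_isUnit_det B).mp hB
  have hBB : B * B⁻¹ = 1 := Matrix.mul_nonsing_inv B hBd
  have hBB' : B⁻¹ * B = 1 := Matrix.nonsing_inv_mul B hBd
  constructor
  · intro hAb
    have mem : ∀ v, wOf A B v ∈ E := fun v =>
      (hE _).mpr ⟨by rw [wOf_e1, wOf_e0], by rw [wOf_e2, wOf_e0]⟩
    have pair : ∀ (i j : Fin 3) (v v' : Fin h → ℂ),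
        stdQ h (wOf A B v (Pi.single i 1)) (wOf A B v' (Pi.single j 1)) =
        stdQ h (wOf A B v' (Pi.single i 1)) (wOf A B v (Pi.single j 1)) :=
      fun i j v v' => hAb _ (mem v) _ (mem v') _ _
    have hA : Aᵀ = A := by
      ext α β
      have := pair 0 1 (Pi.single α 1) (Pi.single β 1)
      rw [stdQ_apply, stdQ_apply, wOf_e0, wOf_e0, wOf_e1, wOf_e1,
        single_dot_mulVec, single_dot_mulVec] at this
      rw [Matrix.transpose_apply]
      exact this.symm
    have hBs : Bᵀ = B := by
      ext α β
      have := pair 0 2 (Pi.single α 1) (Pi.single β 1)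
      rw [stdQ_apply, stdQ_apply, wOf_e0, wOf_e0, wOf_e2, wOf_e2,
        single_dot_mulVec, single_dot_mulVec] at this
      rw [Matrix.transpose_apply]
      exact this.symm
    have hABc : A * B = B * A := by
      have key : Aᵀ * B = Bᵀ * A := by
        ext α β
        have := pair 1 2 (Pi.single α 1) (Pi.single β 1)
        rw [stdQ_apply, stdQ_apply, wOf_e1, wOf_e1, wOf_e2, wOf_e2] at this
        simp only [Matrix.mulVec, dotProduct, Pi.single_apply,
          mul_ite, mul_one, mul_zero, Finset.sum_ite_eq, Finset.sum_ite_eq',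
          Finset.mem_univ, if_true,
          Matrix.mul_apply, Matrix.transpose_apply] at this ⊢
        rw [this]
        exact Finset.sum_congr rfl fun γ _ => mul_comm _ _
      calc A * B = Aᵀ * B := by rw [hA]
        _ = Bᵀ * A := key
        _ = B * A := by rw [hBs]
    refine ⟨hA, hBs, ?_⟩
    calc A * B⁻¹ = (B⁻¹ * B) * (A * B⁻¹) := by rw [hBB', one_mul]
      _ = B⁻¹ * (B * A) * B⁻¹ := by noncomm_ring
      _ = B⁻¹ * (A * B) * B⁻¹ := by rw [hABc]
      _ = (B⁻¹ * A) * (B * B⁻¹) := by noncomm_ring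
      _ = B⁻¹ * A := by rw [hBB, mul_one]
  · rintro ⟨hA, hBs, hABinv⟩
    have hABc : A * B = B * A := by
      calc A * B = (B * B⁻¹) * A * B := by rw [hBB, one_mul]
        _ = B * (B⁻¹ * A) * B := by noncomm_ring
        _ = B * (A * B⁻¹) * B := by rw [hABinv]
        _ = (B * A) * (B⁻¹ * B) := by noncomm_ring
        _ = B * A := by rw [hBB', mul_one]
    intro w hw w' hw' u u'
    set v := w (Pi.single 0 1) with hv
    set v' := w' (Pi.single 0 1) with hv'
    obtain ⟨hw1, hw2⟩ := (hE w).mp hw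
    obtain ⟨hw'1, hw'2⟩ := (hE w').mp hw'
    have hrep : ∀ x, w x = wOf A B v x := by
      intro x
      conv_lhs => rw [fin3_decomp x]
      simp only [map_add, LinearMap.map_smul, hw1, hw2]
      simp [wOf, Matrix.one_mulVec, hv]
    have hrep' : ∀ x, w' x = wOf A B v' x := by
      intro x
      conv_lhs => rw [fin3_decomp x]
      simp only [map_add, LinearMap.map_smul, hw'1, hw'2]
      simp [wOf, Matrix.one_mulVec, hv']
    rw [stdQ_apply, stdQ_apply, hrep u, hrep u', hrep' u, hrep' u']
    show (u 0 • (1 : Matrix (Fin h) (Fin h) ℂ).mulVec v + u 1 • A.mulVec v + u 2 • B.mulVec v) ⬝ᵥ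
        (u' 0 • (1 : Matrix (Fin h) (Fin h) ℂ).mulVec v' + u' 1 • A.mulVec v' + u' 2 • B.mulVec v') =
      (u 0 • (1 : Matrix (Fin h) (Fin h) ℂ).mulVec v' + u 1 • A.mulVec v' + u 2 • B.mulVec v') ⬝ᵥ
        (u' 0 • (1 : Matrix (Fin h) (Fin h) ℂ).mulVec v + u' 1 • A.mulVec v + u' 2 • B.mulVec v)
    have hcrossAB : (Aᵀ * B)ᵀ = Aᵀ * B := by
      rw [Matrix.transpose_mul, Matrix.transpose_transpose, hA, hBs, hABc]
    have hcrossBA : (Bᵀ * A)ᵀ = Bᵀ * A := by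
      rw [Matrix.transpose_mul, Matrix.transpose_transpose, hA, hBs, hABc]
    have e00 := dotswap (1 : Matrix (Fin h) (Fin h) ℂ) 1 (by simp) v v'
    have e01 := dotswap (1 : Matrix (Fin h) (Fin h) ℂ) A (by simp [hA]) v v'
    have e02 := dotswap (1 : Matrix (Fin h) (Fin h) ℂ) B (by simp [hBs]) v v'
    have e10 := dotswap A (1 : Matrix (Fin h) (Fin h) ℂ) (by simp [hA]) v v'
    have e11 := dotswap A A (by simp [Matrix.transpose_mul, hA]) v v'
    have e12 := dotswap A B hcrossAB v v'
    have e20 := dotswap B (1 : Matrix (Fin h) (Fin h) ℂ) (by simp [hBs]) v v'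
    have e21 := dotswap B A hcrossBA v v'
    have e22 := dotswap B B (by simp [Matrix.transpose_mul, hBs]) v v'
    simp only [add_dotProduct, dotProduct_add, smul_dotProduct,
      dotProduct_smul, smul_eq_mul]
    linear_combination (u 0 * u' 0) * e00 + (u 0 * u' 1) * e01 + (u 0 * u' 2) * e02 +
      (u 1 * u' 0) * e10 + (u 1 * u' 1) * e11 + (u 1 * u' 2) * e12 +
      (u 2 * u' 0) * e20 + (u 2 * u' 1) * e21 + (u 2 * u' 2) * e22
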